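/- Let n ≥ 1, let p_1, …, p_n be the n distinct complex roots of f_n, set α_j = 1/n for j = 1,…,n, α_{n+1} = −1, and p_{n+1} = 1. Then all balance quantities vanish: F_k = 2·∑_{j≠k, 1≤j≤n+1} α_j/(p_k − p_j) + α_k/p_k = 0 for every k = 1, 2, …, n+1. -/

import Mathlib

/-!
`f_n = ₂F₁(-n, -n; 1; z)` satisfies the hypergeometric equation
`z (1 - z) f'' + (1 + (2n - 1) z) f' = n² f`. At a simple root `p_k` one has
`f''(p_k) = 2 f'(p_k) ∑_{j ≠ k} 1/(p_k - p_j)`, so the equation becomes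
`2 p_k (1 - p_k) ∑_{j ≠ k} 1/(p_k - p_j) = -(1 + (2n - 1) p_k)`, which is the balance condition
at `p_k`. At `z = 1` it gives `∑_j 1/(1 - p_j) = f'(1)/f(1) = n/2`, the balance condition at
`p_{n+1} = 1`.
-/

open Polynomial

/-- The polynomial `f_n(z) = ∑_{j=0}^n (binom(n,j))^2 z^j` with complex coefficients. -/
noncomputable def hyperPoly (n : ℕ) : Polynomial ℂ :=
  ∑ j ∈ Finset.range (n + 1), Polynomial.C ((n.choose j : ℂ) ^ 2) * Polynomial.X ^ j

open Finset Lagrange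

theorem Polynomial.coeff_X_mul_derivative {R : Type*} [Semiring R] (p : R[X]) (m : ℕ) :
    coeff (X * derivative p) m = m * coeff p m := by
  rcases m with _ | m
  · simp
  · rw [coeff_X_mul, coeff_derivative, ← Nat.cast_succ, Nat.cast_comm]

namespace Lagrange

variable {F ι : Type*} [Field F] [DecidableEq ι] {s : Finset ι} {v : ι → F}

theorem eval_derivative_nodal_eq_mul_sum_inv {x : F} (hx : ∀ i ∈ s, x ≠ v i) :
    eval x (derivative (nodal s v)) = eval x (nodal s v) * ∑ i ∈ s, (x - v i)⁻¹ := by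
  rw [derivative_nodal, eval_finsetSum, mul_sum]
  refine sum_congr rfl fun i hi => ?_
  rw [nodal_eq_mul_nodal_erase hi, eval_mul, eval_sub, eval_X, eval_C,
    mul_comm, ← mul_assoc, inv_mul_cancel₀ (sub_ne_zero.2 (hx i hi)), one_mul]

theorem eval_derivative_derivative_nodal_at_node (hvs : Set.InjOn v s) {i : ι} (hi : i ∈ s) :
    eval (v i) (derivative (derivative (nodal s v)))
      = 2 * eval (v i) (derivative (nodal s v)) * ∑ j ∈ s.erase i, (v i - v j)⁻¹ := by
  have hne : ∀ j ∈ s.erase i, v i ≠ v j := fun j hj h =>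
    (mem_erase.1 hj).1 (hvs (mem_of_mem_erase hj) hi h.symm)
  rw [eval_nodal_derivative_eval_node_eq hi, mul_assoc,
    ← eval_derivative_nodal_eq_mul_sum_inv hne, nodal_eq_mul_nodal_erase hi]
  simp [two_mul]

end Lagrange

theorem coeff_hyperPoly (n m : ℕ) : (hyperPoly n).coeff m = (n.choose m : ℂ) ^ 2 := by
  simp only [hyperPoly, finsetSum_coeff, coeff_C_mul_X_pow, sum_ite_eq, mem_range]
  split_ifs with h
  · rfl
  · simp [Nat.choose_eq_zero_of_lt (by omega : n < m)]

theorem eval_zero_hyperPoly (n : ℕ) : eval 0 (hyperPoly n) = 1 := by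
  simp [← coeff_zero_eq_eval_zero, coeff_hyperPoly]

theorem sq_succ_mul_sq_choose_succ (n m : ℕ) :
    ((m : ℂ) + 1) ^ 2 * (n.choose (m + 1) : ℂ) ^ 2
      = ((n : ℂ) - m) ^ 2 * (n.choose m : ℂ) ^ 2 := by
  rcases le_or_gt m n with h | h
  · have h' := congrArg (Nat.cast : ℕ → ℂ) (Nat.choose_succ_right_eq n m)
    push_cast [Nat.cast_sub h] at h'
    rw [← mul_pow, ← mul_pow, mul_comm, h', mul_comm]
  · simp [Nat.choose_eq_zero_of_lt h, Nat.choose_eq_zero_of_lt (Nat.lt_succ_of_lt h)]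

theorem hyperPoly_ode (n : ℕ) :
    X * (1 - X) * derivative (derivative (hyperPoly n))
      + (1 + C (2 * (n : ℂ) - 1) * X) * derivative (hyperPoly n)
    = C ((n : ℂ) ^ 2) * hyperPoly n := by
  set f := hyperPoly n
  -- written through `θ = X * derivative`, so that every coefficient is explicit
  have hθ : X * (1 - X) * derivative (derivative f)
        + (1 + C (2 * (n : ℂ) - 1) * X) * derivative f
      = derivative (X * derivative f) - X * derivative (X * derivative f)
        + C (2 * (n : ℂ)) * (X * derivative f) := by
    simp only [derivative_mul, derivative_X, one_mul, C_sub, C_mul, C_1]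
    ring
  ext m
  rw [hθ]
  simp only [coeff_add, coeff_sub, coeff_C_mul, coeff_X_mul_derivative, coeff_derivative, f,
    coeff_hyperPoly]
  push_cast
  linear_combination sq_succ_mul_sq_choose_succ n m

section Roots

variable {ι : Type*} {s : Finset ι} {v : ι → ℂ} {n : ℕ}

theorem ne_zero_of_hyperPoly_eq_nodal (hf : hyperPoly n = nodal s v) {k : ι} (hk : k ∈ s) :
    v k ≠ 0 := fun h => by
  have h0 := eval_zero_hyperPoly n
  rw [hf, ← h, eval_nodal_at_node hk] at h0
  exact zero_ne_one h0

theorem sum_inv_sub_roots_hyperPoly [DecidableEq ι] (hf : hyperPoly n = nodal s v)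
    (hvs : Set.InjOn v s) {k : ι} (hk : k ∈ s) :
    2 * v k * (1 - v k) * ∑ j ∈ s.erase k, (v k - v j)⁻¹ + (1 + (2 * n - 1) * v k) = 0 := by
  have hode := congrArg (eval (v k)) (hyperPoly_ode n)
  simp only [hf, eval_add, eval_mul, eval_sub, eval_one, eval_X, eval_C, eval_nodal_at_node hk,
    mul_zero, eval_derivative_derivative_nodal_at_node hvs hk] at hode
  have hderiv : eval (v k) (derivative (nodal s v)) ≠ 0 := fun h =>
    nodalWeight_ne_zero hvs hk (by rw [nodalWeight_eq_eval_derivative_nodal hk, h, inv_zero])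
  exact (mul_eq_zero.1 (by linear_combination hode)).resolve_left hderiv

theorem sum_inv_one_sub_roots_hyperPoly [DecidableEq ι] (hn : n ≠ 0)
    (hf : hyperPoly n = nodal s v) (h1 : ∀ i ∈ s, 1 ≠ v i) :
    2 * ∑ i ∈ s, (1 - v i)⁻¹ = n := by
  have hode := congrArg (eval 1) (hyperPoly_ode n)
  simp only [hf, eval_add, eval_mul, eval_sub, eval_one, eval_X, eval_C,
    eval_derivative_nodal_eq_mul_sum_inv h1] at hode
  have hn' : (n : ℂ) ≠ 0 := Nat.cast_ne_zero.2 hn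
  apply mul_left_cancel₀ (mul_ne_zero hn' (eval_nodal_not_at_node h1))
  linear_combination hode

end Roots

/-- Let `n ≥ 1`, let `p 1, …, p n` be the `n` distinct complex roots of `f_n`, set
`α j = 1/n` for `j = 1, …, n`, `α (n+1) = −1` and `p (n+1) = 1`.  Then all balance
quantities vanish: `F_k = 2·∑_{j≠k} α_j/(p_k − p_j) + α_k/p_k = 0` for every
`k = 1, …, n+1`. -/
theorem stmt_6 (n : ℕ) (hn : 1 ≤ n)
    (p : Fin (n + 1) → ℂ) (α : Fin (n + 1) → ℂ)
    (hp : Function.Injective p)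
    (hroots : hyperPoly n
      = ∏ j ∈ Finset.univ.erase (Fin.last n), (Polynomial.X - Polynomial.C (p j)))
    (hplast : p (Fin.last n) = 1)
    (hα : ∀ j : Fin (n + 1), j ≠ Fin.last n → α j = 1 / (n : ℂ))
    (hαlast : α (Fin.last n) = -1)
    (k : Fin (n + 1)) :
    2 * (∑ j ∈ Finset.univ.erase k, α j / (p k - p j)) + α k / p k = 0 := by
  set s := univ.erase (Fin.last n)
  have hf : hyperPoly n = nodal s p := hroots
  have hn' : (n : ℂ) ≠ 0 := Nat.cast_ne_zero.2 (by omega)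
  have hαsum : ∀ t ⊆ s, ∀ x,
      ∑ j ∈ t, α j / (x - p j) = (n : ℂ)⁻¹ * ∑ j ∈ t, (x - p j)⁻¹ := fun t ht x => by
      rw [mul_sum]
      exact sum_congr rfl fun j hj => by
        rw [hα j (ne_of_mem_erase (ht hj)), div_eq_mul_inv, one_div]
  by_cases hk : k = Fin.last n
  · subst hk
    have hsum := sum_inv_one_sub_roots_hyperPoly (by omega) hf
      fun i hi => hplast ▸ hp.ne (ne_of_mem_erase hi).symm
    rw [hαlast, hplast, hαsum s subset_rfl, mul_left_comm, hsum, inv_mul_cancel₀ hn']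
    norm_num
  · have hks : k ∈ s := mem_erase.2 ⟨hk, mem_univ k⟩
    have hroot := sum_inv_sub_roots_hyperPoly hf hp.injOn hks
    have hpk0 := ne_zero_of_hyperPoly_eq_nodal hf hks
    have hpk1 : p k - 1 ≠ 0 := sub_ne_zero.2 (hplast ▸ hp.ne hk)
    rw [← add_sum_erase _ _ (mem_erase.2 ⟨Ne.symm hk, mem_univ _⟩), erase_right_comm,
      hαsum _ (erase_subset k s), hαlast, hplast, hα k hk]
    generalize ∑ j ∈ s.erase k, (p k - p j)⁻¹ = S at hroot ⊢
    field_simp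
    linear_combination -hroot
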